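/- arXiv:1210.7257 — 2 statements merged into one kernel-verified Lean document; each statement's English description precedes it below -/
import Mathlib

section
/- Let Ω̂ = {ω_1,…,ω_n} be a finite probability space with equal probabilities p_i = 1/n, i = 1,…,n, and let ϱ be a law invariant coherent risk measure on the space of random variables Y : Ω̂ → ℝ. Then ϱ is regular; in particular ϱ admits a Kusuoka representation: there exists a set 𝔐 of probability measures on [0,1] with zero mass at {1} such that ϱ(Y) = sup_{μ∈𝔐} ∫₀¹ AV@R_α(Y) dμ(α) for every Y : Ω̂ → ℝ. -/
open MeasureTheory Set Filter Topology
open scoped ENNReal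

noncomputable section

/-- The standard probability space: the uniform (Lebesgue) probability measure on `[0,1] ⊆ ℝ`. -/
def stdP : Measure ℝ := volume.restrict (Icc (0:ℝ) 1)

/-- Cumulative distribution function of a random variable `Z` on the standard space. -/
def cdf (Z : ℝ → ℝ) (z : ℝ) : ℝ := (stdP {ω | Z ω ≤ z}).toReal

/-- Right-side quantile function `F_Z^{-1}(τ) = sup{t : F_Z(t) ≤ τ}`. -/
def quant (Z : ℝ → ℝ) (τ : ℝ) : ℝ := sSup {t : ℝ | cdf Z t ≤ τ}

/-- Average Value-at-Risk at level `α`. -/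
def avar (Z : ℝ → ℝ) (α : ℝ) : ℝ := (1 - α)⁻¹ * ∫ τ in Ioc α 1, quant Z τ

/-- The scalar product `⟨ζ, Z⟩ = ∫₀¹ ζ(τ) Z(τ) dτ`. -/
def pairing (ζ Z : ℝ → ℝ) : ℝ := ∫ ω, ζ ω * Z ω ∂stdP

/-- Expectation w.r.t. the standard probability space. -/
def expct (Z : ℝ → ℝ) : ℝ := ∫ ω, Z ω ∂stdP

/-- `μ ∈ 𝔓`: a probability measure supported on `[0,1]` with zero mass at `{1}`. -/
def IsP01 (μ : Measure ℝ) : Prop :=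
  IsProbabilityMeasure μ ∧ μ (Icc (0:ℝ) 1)ᶜ = 0 ∧ μ {(1:ℝ)} = 0

/-- cdf of a measure on ℝ. -/
def mcdf (μ : Measure ℝ) (x : ℝ) : ℝ := (μ (Iic x)).toReal

/-- First order stochastic dominance `μ ≼ ν`, i.e. `μ(x) ≥ ν(x)` for all `x`. -/
def FSD (μ ν : Measure ℝ) : Prop := ∀ x : ℝ, mcdf ν x ≤ mcdf μ x

/-- The map `𝕋`: `(𝕋μ)(τ) = ∫_{[0,τ]} (1-α)⁻¹ dμ(α)`. -/
def Tmap (μ : Measure ℝ) (τ : ℝ) : ℝ := ∫ α in Icc (0:ℝ) τ, (1 - α)⁻¹ ∂μ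

/-- Spectral function: nonnegative, nondecreasing, right-continuous on `[0,1)`,
integrating to one. -/
def IsSpectral (σ : ℝ → ℝ) : Prop :=
  (∀ t ∈ Ico (0:ℝ) 1, 0 ≤ σ t) ∧ MonotoneOn σ (Ico (0:ℝ) 1) ∧
  (∀ t ∈ Ico (0:ℝ) 1, ContinuousWithinAt σ (Ici t) t) ∧
  (∫ t in Ioo (0:ℝ) 1, σ t) = 1

/-- An element of `L_q` is (a.e.) spectral if it has a spectral representative. -/
def IsSpectralAE (σ : ℝ → ℝ) : Prop := ∃ σ₀ : ℝ → ℝ, IsSpectral σ₀ ∧ σ =ᵐ[stdP] σ₀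

/-- `∫₀¹ AV@R_α(Z) dμ(α)`. -/
def kusuokaIntegral (μ : Measure ℝ) (Z : ℝ → ℝ) : ℝ := ∫ α, avar Z α ∂μ

/-- `∫₀¹ σ(τ) F_Z^{-1}(τ) dτ`. -/
def spectralIntegral (σ Z : ℝ → ℝ) : ℝ := ∫ t in Ioo (0:ℝ) 1, σ t * quant Z t

/-- Coherent risk measure on `L_p` of the standard space: monotone, convex,
translation equivariant and positively homogeneous. -/
def IsCoherent (p : ℝ≥0∞) (ρ : (ℝ → ℝ) → ℝ) : Prop :=
  (∀ Z Z' : ℝ → ℝ, MemLp Z p stdP → MemLp Z' p stdP →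
      (∀ᵐ ω ∂stdP, Z' ω ≤ Z ω) → ρ Z' ≤ ρ Z) ∧
  (∀ Z Z' : ℝ → ℝ, ∀ t : ℝ, MemLp Z p stdP → MemLp Z' p stdP → t ∈ Icc (0:ℝ) 1 →
      ρ (fun ω => t * Z ω + (1 - t) * Z' ω) ≤ t * ρ Z + (1 - t) * ρ Z') ∧
  (∀ Z : ℝ → ℝ, ∀ a : ℝ, MemLp Z p stdP → ρ (fun ω => Z ω + a) = ρ Z + a) ∧
  (∀ Z : ℝ → ℝ, ∀ t : ℝ, MemLp Z p stdP → 0 ≤ t → ρ (fun ω => t * Z ω) = t * ρ Z)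

/-- Law invariance: distributionally equivalent random variables get the same value. -/
def IsLawInvariant (p : ℝ≥0∞) (ρ : (ℝ → ℝ) → ℝ) : Prop :=
  ∀ Z Z' : ℝ → ℝ, MemLp Z p stdP → MemLp Z' p stdP → cdf Z = cdf Z' → ρ Z = ρ Z'

/-- `𝔐 ⊆ 𝔓` is a Kusuoka set for `ρ` : `ρ(Z) = sup_{μ∈𝔐} ∫₀¹ AV@R_α(Z) dμ(α)`. -/
def IsKusuokaSet (p : ℝ≥0∞) (ρ : (ℝ → ℝ) → ℝ) (M : Set (Measure ℝ)) : Prop :=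
  (∀ μ ∈ M, IsP01 μ) ∧
  ∀ Z : ℝ → ℝ, MemLp Z p stdP →
    IsLUB {x : ℝ | ∃ μ ∈ M, x = kusuokaIntegral μ Z} (ρ Z)

/-- `Υ ⊆ 𝔖` is a generating set for `ρ` : `ρ(Z) = sup_{σ∈Υ} ∫₀¹ σ(τ) F_Z^{-1}(τ) dτ`. -/
def IsGeneratingSet (p : ℝ≥0∞) (ρ : (ℝ → ℝ) → ℝ) (Υ : Set (ℝ → ℝ)) : Prop :=
  (∀ σ ∈ Υ, IsSpectralAE σ) ∧
  ∀ Z : ℝ → ℝ, MemLp Z p stdP →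
    IsLUB {x : ℝ | ∃ σ ∈ Υ, x = spectralIntegral σ Z} (ρ Z)

/-- The dual set `𝔄 = {ζ ∈ Z* : ⟨ζ,Z⟩ ≤ ρ(Z) for all Z ∈ Z}`. -/
def dualSet (p q : ℝ≥0∞) (ρ : (ℝ → ℝ) → ℝ) : Set (ℝ → ℝ) :=
  {ζ : ℝ → ℝ | MemLp ζ q stdP ∧ ∀ Z : ℝ → ℝ, MemLp Z p stdP → pairing ζ Z ≤ ρ Z}

/-- `Z` exposes `A` at `ζbar`: `ζ ↦ ⟨ζ,Z⟩` attains its maximum over `A`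
at the unique (up to a.e. equality) point `ζbar`. -/
def Exposes (A : Set (ℝ → ℝ)) (Z ζbar : ℝ → ℝ) : Prop :=
  ζbar ∈ A ∧ (∀ ζ ∈ A, pairing ζ Z ≤ pairing ζbar Z) ∧
  ∀ ζ ∈ A, pairing ζ Z = pairing ζbar Z → ζ =ᵐ[stdP] ζbar

/-- The set `Exp(A)` of weak* exposed points of `A`. -/
def expPoints (p : ℝ≥0∞) (A : Set (ℝ → ℝ)) : Set (ℝ → ℝ) :=
  {ζ : ℝ → ℝ | ∃ Z : ℝ → ℝ, MemLp Z p stdP ∧ Exposes A Z ζ}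

/-- The weak* topology on (densities of) elements of `Z* = L_q`, induced by the
pairings against elements of `Z = L_p`. -/
def wstarTop (p : ℝ≥0∞) : TopologicalSpace (ℝ → ℝ) :=
  TopologicalSpace.induced
    (fun ζ => fun Z : {Z : ℝ → ℝ // MemLp Z p stdP} => pairing ζ Z.1)
    Pi.topologicalSpace

/-- Weak* closure. -/
def wstarClosure (p : ℝ≥0∞) (S : Set (ℝ → ℝ)) : Set (ℝ → ℝ) :=
  @closure _ (wstarTop p) S

/-- Weak* closedness. -/
def IsWStarClosed (p : ℝ≥0∞) (S : Set (ℝ → ℝ)) : Prop :=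
  @IsClosed _ (wstarTop p) S

/-- The weak topology of measures, induced by integration of bounded continuous functions. -/
def weakTopM : TopologicalSpace (Measure ℝ) :=
  TopologicalSpace.induced
    (fun μ => fun f : BoundedContinuousFunction ℝ ℝ => ∫ x, f x ∂μ)
    Pi.topologicalSpace

/-- Closure in the weak topology of measures. -/
def weakClosureM (M : Set (Measure ℝ)) : Set (Measure ℝ) := @closure _ weakTopM M

/-- Closure within `𝔓` (in the weak topology of measures). -/
def closureP (M : Set (Measure ℝ)) : Set (Measure ℝ) := weakClosureM M ∩ {μ | IsP01 μ}

/-- Closedness within `𝔓`. -/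
def IsClosedInP (M : Set (Measure ℝ)) : Prop := closureP M ⊆ M

/-- The minimal Kusuoka set: a closed Kusuoka set contained in every closed Kusuoka set. -/
def IsMinimalKusuoka (p : ℝ≥0∞) (ρ : (ℝ → ℝ) → ℝ) (M : Set (Measure ℝ)) : Prop :=
  IsKusuokaSet p ρ M ∧ IsClosedInP M ∧
  ∀ M' : Set (Measure ℝ), IsKusuokaSet p ρ M' → IsClosedInP M' → M ⊆ M'

/-- Measure-preserving transformations of `[0,1]`: bijections of `[0,1]` with
`P(T(A)) = P(A)` for all measurable `A`. -/
def IsMPT (T : ℝ → ℝ) : Prop :=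
  Measurable T ∧ BijOn T (Icc (0:ℝ) 1) (Icc (0:ℝ) 1) ∧
  ∀ A : Set ℝ, MeasurableSet A → stdP (T '' A) = stdP A

/-- cdf of a random variable on a finite probability space with weights `pr`. -/
def cdfFinW {n : ℕ} (pr : Fin n → ℝ) (Y : Fin n → ℝ) (z : ℝ) : ℝ :=
  ∑ i ∈ Finset.univ.filter (fun i => Y i ≤ z), pr i

/-- right-side quantile on a finite probability space. -/
def quantFinW {n : ℕ} (pr : Fin n → ℝ) (Y : Fin n → ℝ) (τ : ℝ) : ℝ :=
  sSup {t : ℝ | cdfFinW pr Y t ≤ τ}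

/-- Average Value-at-Risk on a finite probability space. -/
def avarFinW {n : ℕ} (pr : Fin n → ℝ) (Y : Fin n → ℝ) (α : ℝ) : ℝ :=
  (1 - α)⁻¹ * ∫ τ in Ioc α 1, quantFinW pr Y τ

/-!
A law invariant coherent `ϱ` on `ℝⁿ` is sublinear, hence (Hahn–Banach) the maximum of the
linear functionals `q ⬝ᵥ ·` below it, and monotonicity and translation equivariance make each
such `q` a probability vector. By permutation invariance and the rearrangement inequality, at a
sorted vector the maximum is attained by a nondecreasing `q`. Abel summation writes `q ⬝ᵥ Y`,
for sorted `Y`, as `∫ AV@R_α(Y) dμ_q(α)` for a discrete `μ_q ∈ 𝔓` carried by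
`{0, 1/n, …, (n-1)/n}`: these measures form a Kusuoka set.

For regularity, `ϱ` is extended to `L¹[0,1]` by `ρ(Z) = ϱ(Ẑ)`, where `Ẑ_k` is the average of
`F_Z^{-1}` over `[k/n, (k+1)/n]`. Since `Ẑ` is sorted, `ρ(Z) = ∫ AV@R_α(Z) dμ_q(α)` for a
maximising `q`, so convexity of `ρ` reduces to convexity of `Z ↦ AV@R_α(Z)`. That follows from
the Rockafellar–Uryasev formula, once one knows that `F_Z^{-1}` has the law of `Z` under
Lebesgue measure on `(0, 1)`.
-/

instance : IsProbabilityMeasure stdP :=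
  ⟨by simp [stdP, Real.volume_Icc]⟩

instance : IsProbabilityMeasure (volume.restrict (Ioo (0 : ℝ) 1)) :=
  ⟨by simp [Real.volume_Ioo]⟩

section Quantile

variable {Z : ℝ → ℝ}

lemma cdf_nonneg (Z : ℝ → ℝ) (t : ℝ) : 0 ≤ cdf Z t := ENNReal.toReal_nonneg

lemma cdf_mono (Z : ℝ → ℝ) : Monotone (cdf Z) := fun _ _ h =>
  ENNReal.toReal_mono (measure_ne_top _ _) (measure_mono fun _ hω => le_trans hω h)

lemma cdf_eq_cdf_map (hZ : AEMeasurable Z stdP) :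
    cdf Z = ProbabilityTheory.cdf (stdP.map Z) := by
  have := Measure.isProbabilityMeasure_map hZ
  funext z
  rw [ProbabilityTheory.cdf_eq_real, measureReal_def, Measure.map_apply_of_aemeasurable hZ
    measurableSet_Iic]
  rfl

lemma quant_congr {Z' : ℝ → ℝ} (h : cdf Z = cdf Z') : quant Z = quant Z' :=
  funext fun τ => by rw [quant, quant, h]

lemma cdf_le_cdf_of_ae_le {Z' : ℝ → ℝ} (h : ∀ᵐ ω ∂stdP, Z' ω ≤ Z ω) (t : ℝ) :
    cdf Z t ≤ cdf Z' t :=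
  ENNReal.toReal_mono (measure_ne_top _ _) (measure_mono_ae (h.mono fun _ hω hle => hω.trans hle))

lemma nonempty_cdf_le (hZ : AEMeasurable Z stdP) {τ : ℝ} (hτ : 0 < τ) :
    {t | cdf Z t ≤ τ}.Nonempty := by
  have := Measure.isProbabilityMeasure_map hZ
  rw [cdf_eq_cdf_map hZ]
  obtain ⟨t, ht⟩ := ((ProbabilityTheory.tendsto_cdf_atBot (μ := stdP.map Z)).eventually
    (eventually_lt_nhds hτ)).exists
  exact ⟨t, ht.le⟩

lemma bddAbove_cdf_le (hZ : AEMeasurable Z stdP) {τ : ℝ} (hτ : τ < 1) :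
    BddAbove {t | cdf Z t ≤ τ} := by
  have := Measure.isProbabilityMeasure_map hZ
  obtain ⟨t₀, ht₀⟩ := eventually_atTop.1
    ((ProbabilityTheory.tendsto_cdf_atTop (μ := stdP.map Z)).eventually (eventually_gt_nhds hτ))
  refine ⟨t₀, fun t (ht : cdf Z t ≤ τ) => le_of_not_gt fun h => ?_⟩
  rw [cdf_eq_cdf_map hZ] at ht
  linarith [ht₀ t h.le]

lemma isLUB_quant (hZ : AEMeasurable Z stdP) {τ : ℝ} (hτ : τ ∈ Ioo 0 1) :
    IsLUB {t | cdf Z t ≤ τ} (quant Z τ) :=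
  isLUB_csSup (nonempty_cdf_le hZ hτ.1) (bddAbove_cdf_le hZ hτ.2)

lemma quant_le_quant_of_cdf_le {Z' : ℝ → ℝ} (hZ : AEMeasurable Z stdP)
    (hZ' : AEMeasurable Z' stdP) (h : ∀ t, cdf Z t ≤ cdf Z' t) {τ : ℝ} (hτ : τ ∈ Ioo 0 1) :
    quant Z' τ ≤ quant Z τ :=
  (isLUB_quant hZ' hτ).mono (isLUB_quant hZ hτ) fun t ht => (h t).trans ht

lemma monotoneOn_quant (hZ : AEMeasurable Z stdP) : MonotoneOn (quant Z) (Ioo 0 1) :=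
  fun _ ha _ hb hab =>
    (isLUB_quant hZ ha).mono (isLUB_quant hZ hb) fun _ ht => le_trans ht hab

lemma lt_quant_of_cdf_lt (hZ : AEMeasurable Z stdP) {v τ : ℝ} (hτ : τ ∈ Ioo 0 1)
    (h : cdf Z v < τ) : v < quant Z τ := by
  have := Measure.isProbabilityMeasure_map hZ
  rw [cdf_eq_cdf_map hZ] at h
  have hcont : ContinuousWithinAt (ProbabilityTheory.cdf (stdP.map Z)) (Ioi v) v :=
    ((ProbabilityTheory.cdf _).right_continuous v).mono Ioi_subset_Ici_self
  obtain ⟨t, ht, hvt⟩ := ((hcont.eventually (eventually_lt_nhds h)).and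
    self_mem_nhdsWithin).exists
  refine lt_of_lt_of_le hvt ((isLUB_quant hZ hτ).1 ?_)
  change cdf Z t ≤ τ
  rw [cdf_eq_cdf_map hZ]
  exact ht.le

lemma cdf_le_of_lt_quant (hZ : AEMeasurable Z stdP) {v τ : ℝ} (hτ : τ ∈ Ioo 0 1)
    (h : v < quant Z τ) : cdf Z v ≤ τ := by
  obtain ⟨t, ht, hvt, -⟩ := (isLUB_quant hZ hτ).exists_between h
  exact (cdf_mono Z hvt.le).trans ht

lemma aemeasurable_quant (hZ : AEMeasurable Z stdP) :
    AEMeasurable (quant Z) (volume.restrict (Ioo 0 1)) :=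
  aemeasurable_restrict_of_monotoneOn measurableSet_Ioo (monotoneOn_quant hZ)

lemma volume_lt_quant (hZ : AEMeasurable Z stdP) (v : ℝ) :
    volume ({τ | v < quant Z τ} ∩ Ioo 0 1) = ENNReal.ofReal (1 - cdf Z v) := by
  refine le_antisymm ?_ ?_
  · rw [← Real.volume_Icc]
    exact measure_mono fun τ ⟨hv, hτ⟩ => ⟨cdf_le_of_lt_quant hZ hτ hv, hτ.2.le⟩
  · rw [← Real.volume_Ioo]
    refine measure_mono fun τ hτ => ?_
    have hτ' : τ ∈ Ioo 0 1 := ⟨(cdf_nonneg Z v).trans_lt hτ.1, hτ.2⟩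
    exact ⟨lt_quant_of_cdf_lt hZ hτ' hτ.1, hτ'⟩

lemma map_quant (hZ : AEMeasurable Z stdP) :
    (volume.restrict (Ioo 0 1)).map (quant Z) = stdP.map Z := by
  have := Measure.isProbabilityMeasure_map hZ
  have := Measure.isProbabilityMeasure_map (aemeasurable_quant hZ)
  have hIoi : ∀ v, (volume.restrict (Ioo 0 1)).map (quant Z) (Ioi v) = stdP.map Z (Ioi v) := by
    intro v
    rw [Measure.map_apply_of_aemeasurable (aemeasurable_quant hZ) measurableSet_Ioi,
      Measure.restrict_apply' measurableSet_Ioo]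
    refine (volume_lt_quant hZ v).trans ?_
    rw [ENNReal.ofReal_sub _ (cdf_nonneg Z v), ENNReal.ofReal_one, cdf_eq_cdf_map hZ,
      ProbabilityTheory.ofReal_cdf, ← prob_compl_eq_one_sub measurableSet_Iic, compl_Iic]
  refine Measure.ext_of_Iic _ _ fun t => ?_
  rw [← compl_Ioi, prob_compl_eq_one_sub measurableSet_Ioi, prob_compl_eq_one_sub
    measurableSet_Ioi, hIoi]

lemma integral_comp_quant (hZ : AEMeasurable Z stdP) {g : ℝ → ℝ} (hg : Measurable g) :
    ∫ τ in Ioo 0 1, g (quant Z τ) = ∫ ω, g (Z ω) ∂stdP := by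
  rw [← integral_map (aemeasurable_quant hZ) hg.aestronglyMeasurable, map_quant hZ,
    integral_map hZ hg.aestronglyMeasurable]

lemma integrableOn_quant (hZ : Integrable Z stdP) : IntegrableOn (quant Z) (Ioo 0 1) := by
  have hZm := hZ.aemeasurable
  rw [IntegrableOn, ← Function.id_comp (quant Z), ← integrable_map_measure
    aestronglyMeasurable_id (aemeasurable_quant hZm), map_quant hZm,
    integrable_map_measure aestronglyMeasurable_id hZm]
  exact hZ

lemma quant_orderIso_comp (f : ℝ ≃o ℝ) (hZ : AEMeasurable Z stdP) {τ : ℝ} (hτ : τ ∈ Ioo 0 1) :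
    quant (fun ω => f (Z ω)) τ = f (quant Z τ) := by
  have hset : {t | cdf (fun ω => f (Z ω)) t ≤ τ} = f '' {s | cdf Z s ≤ τ} := by
    ext t
    simp only [f.image_eq_preimage_symm, mem_preimage, mem_ofPred_eq, cdf, ← f.le_symm_apply]
  rw [quant, hset, ← f.map_csSup' (nonempty_cdf_le hZ hτ.1) (bddAbove_cdf_le hZ hτ.2), quant]

lemma quant_const (c : ℝ) {τ : ℝ} (hτ : τ ∈ Ioo 0 1) : quant (fun _ => c) τ = c := by
  have hset : {t | cdf (fun _ => c) t ≤ τ} = Iio c := by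
    ext t
    by_cases h : c ≤ t <;> simp [cdf, h, hτ.1.le, hτ.2.not_ge, not_le.1]
  rw [quant, hset, csSup_Iio]

lemma quant_add_const (hZ : AEMeasurable Z stdP) (a : ℝ) {τ : ℝ} (hτ : τ ∈ Ioo 0 1) :
    quant (fun ω => Z ω + a) τ = quant Z τ + a :=
  quant_orderIso_comp (OrderIso.addRight a) hZ hτ

lemma quant_const_mul (hZ : AEMeasurable Z stdP) {t : ℝ} (ht : 0 ≤ t) {τ : ℝ}
    (hτ : τ ∈ Ioo 0 1) : quant (fun ω => t * Z ω) τ = t * quant Z τ := by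
  rcases ht.eq_or_lt with rfl | ht
  · simpa using quant_const 0 hτ
  · exact quant_orderIso_comp (OrderIso.mulLeft₀ t ht) hZ hτ

end Quantile

section RockafellarUryasev

variable {f : ℝ → ℝ}

lemma integrableOn_posPart_sub (hf : IntegrableOn f (Ioo 0 1)) (s : ℝ) :
    IntegrableOn (fun τ => max (f τ - s) 0) (Ioo 0 1) :=
  (hf.sub (integrableOn_const (by simp [Real.volume_Ioo]))).pos_part

lemma setIntegral_Ioc_le_add_integral_posPart (hf : IntegrableOn f (Ioo 0 1)) {α : ℝ}
    (hα : α ∈ Icc 0 1) (s : ℝ) :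
    ∫ τ in Ioc α 1, f τ ≤ (1 - α) * s + ∫ τ in Ioo 0 1, max (f τ - s) 0 := by
  have hsub : Ioo α 1 ⊆ Ioo 0 1 := Ioo_subset_Ioo_left hα.1
  have hpos := integrableOn_posPart_sub hf s
  have hs : IntegrableOn (fun _ => s) (Ioo α 1) := integrableOn_const (by simp [Real.volume_Ioo])
  rw [integral_Ioc_eq_integral_Ioo]
  calc ∫ τ in Ioo α 1, f τ ≤ ∫ τ in Ioo α 1, (s + max (f τ - s) 0) :=
        setIntegral_mono_on (hf.mono_set hsub) (hs.add (hpos.mono_set hsub)) measurableSet_Ioo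
          fun τ _ => by linarith [le_max_left (f τ - s) 0]
    _ = (1 - α) * s + ∫ τ in Ioo α 1, max (f τ - s) 0 := by
        rw [integral_add hs (hpos.mono_set hsub), setIntegral_const,
          Real.volume_real_Ioo_of_le hα.2, smul_eq_mul]
    _ ≤ (1 - α) * s + ∫ τ in Ioo 0 1, max (f τ - s) 0 := by
        gcongr
        exact ae_of_all _ fun τ => le_max_right _ _

lemma setIntegral_Ioc_eq_add_integral_posPart (hf : IntegrableOn f (Ioo 0 1))
    (hmono : MonotoneOn f (Ioo 0 1)) {α : ℝ} (hα : α ∈ Ioo 0 1) :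
    ∫ τ in Ioc α 1, f τ = (1 - α) * f α + ∫ τ in Ioo 0 1, max (f τ - f α) 0 := by
  have hsub : Ioo α 1 ⊆ Ioo 0 1 := Ioo_subset_Ioo_left hα.1.le
  have hvanish : ∀ τ ∈ Ioo 0 1 \ Ioo α 1, max (f τ - f α) 0 = 0 := fun τ ⟨hτ, hτα⟩ =>
    max_eq_right (sub_nonpos.2 (hmono hτ hα (not_lt.1 fun h => hτα ⟨h, hτ.2⟩)))
  have hpos : ∀ τ ∈ Ioo α 1, max (f τ - f α) 0 = f τ - f α := fun τ hτ =>
    max_eq_left (sub_nonneg.2 (hmono hα (hsub hτ) hτ.1.le))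
  rw [setIntegral_eq_of_subset_of_forall_sdiff_eq_zero measurableSet_Ioo hsub hvanish,
    setIntegral_congr_fun measurableSet_Ioo hpos, integral_sub (hf.mono_set hsub)
    (integrableOn_const (by simp [Real.volume_Ioo])), setIntegral_const,
    Real.volume_real_Ioo_of_le hα.2.le, smul_eq_mul, integral_Ioc_eq_integral_Ioo]
  ring

end RockafellarUryasev

section AVaR

variable {Z Z' : ℝ → ℝ}

lemma setIntegral_quant_Ioc_le (hZ : Integrable Z stdP) {α : ℝ} (hα : α ∈ Icc 0 1) (s : ℝ) :
    ∫ τ in Ioc α 1, quant Z τ ≤ (1 - α) * s + ∫ ω, max (Z ω - s) 0 ∂stdP := by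
  rw [← integral_comp_quant hZ.aemeasurable (g := fun x => max (x - s) 0) (by fun_prop)]
  exact setIntegral_Ioc_le_add_integral_posPart (integrableOn_quant hZ) hα s

lemma setIntegral_quant_Ioc_eq (hZ : Integrable Z stdP) {α : ℝ} (hα : α ∈ Ioo 0 1) :
    ∫ τ in Ioc α 1, quant Z τ = (1 - α) * quant Z α + ∫ ω, max (Z ω - quant Z α) 0 ∂stdP := by
  rw [← integral_comp_quant hZ.aemeasurable (g := fun x => max (x - quant Z α) 0) (by fun_prop)]
  exact setIntegral_Ioc_eq_add_integral_posPart (integrableOn_quant hZ)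
    (monotoneOn_quant hZ.aemeasurable) hα

lemma setIntegral_quant_Ioc_zero (hZ : Integrable Z stdP) :
    ∫ τ in Ioc 0 1, quant Z τ = ∫ ω, Z ω ∂stdP := by
  rw [integral_Ioc_eq_integral_Ioo]
  exact integral_comp_quant hZ.aemeasurable measurable_id

/-- Rockafellar–Uryasev: the tail integral is an infimum of functions that are convex in `Z`,
attained at `s = quant Z α` when `α > 0`. -/
lemma setIntegral_quant_Ioc_convex (hZ : Integrable Z stdP) (hZ' : Integrable Z' stdP)
    {t α : ℝ} (ht : t ∈ Icc 0 1) (hα : α ∈ Ico 0 1) :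
    ∫ τ in Ioc α 1, quant (fun ω => t * Z ω + (1 - t) * Z' ω) τ ≤
      t * (∫ τ in Ioc α 1, quant Z τ) + (1 - t) * ∫ τ in Ioc α 1, quant Z' τ := by
  have hW : Integrable (fun ω => t * Z ω + (1 - t) * Z' ω) stdP :=
    (hZ.const_mul t).add (hZ'.const_mul (1 - t))
  have ht' : 0 ≤ 1 - t := sub_nonneg.2 ht.2
  rcases hα.1.eq_or_lt with rfl | hα0
  · rw [setIntegral_quant_Ioc_zero hW, setIntegral_quant_Ioc_zero hZ,
      setIntegral_quant_Ioc_zero hZ', integral_add (hZ.const_mul t) (hZ'.const_mul (1 - t)),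
      integral_const_mul, integral_const_mul]
  set s := quant Z α
  set s' := quant Z' α
  have hpos : Integrable (fun ω => max (Z ω - s) 0) stdP := (hZ.sub (integrable_const s)).pos_part
  have hpos' : Integrable (fun ω => max (Z' ω - s') 0) stdP :=
    (hZ'.sub (integrable_const s')).pos_part
  have hconv : ∀ ω, max (t * Z ω + (1 - t) * Z' ω - (t * s + (1 - t) * s')) 0 ≤
      t * max (Z ω - s) 0 + (1 - t) * max (Z' ω - s') 0 := fun ω =>
    max_le (by nlinarith [le_max_left (Z ω - s) 0, le_max_left (Z' ω - s') 0, ht.1])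
      (add_nonneg (mul_nonneg ht.1 (le_max_right _ _)) (mul_nonneg ht' (le_max_right _ _)))
  calc ∫ τ in Ioc α 1, quant (fun ω => t * Z ω + (1 - t) * Z' ω) τ
      ≤ (1 - α) * (t * s + (1 - t) * s') +
          ∫ ω, max (t * Z ω + (1 - t) * Z' ω - (t * s + (1 - t) * s')) 0 ∂stdP :=
        setIntegral_quant_Ioc_le hW (Ico_subset_Icc_self hα) _
    _ ≤ (1 - α) * (t * s + (1 - t) * s') +
          ∫ ω, (t * max (Z ω - s) 0 + (1 - t) * max (Z' ω - s') 0) ∂stdP :=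
        (add_le_add_iff_left _).2 (integral_mono (hW.sub (integrable_const _)).pos_part
          ((hpos.const_mul t).add (hpos'.const_mul (1 - t))) hconv)
    _ = t * ((1 - α) * s + ∫ ω, max (Z ω - s) 0 ∂stdP) +
          (1 - t) * ((1 - α) * s' + ∫ ω, max (Z' ω - s') 0 ∂stdP) := by
        rw [integral_add (hpos.const_mul t) (hpos'.const_mul (1 - t)), integral_const_mul,
          integral_const_mul]
        ring
    _ = t * (∫ τ in Ioc α 1, quant Z τ) + (1 - t) * ∫ τ in Ioc α 1, quant Z' τ := by
        rw [setIntegral_quant_Ioc_eq hZ ⟨hα0, hα.2⟩, setIntegral_quant_Ioc_eq hZ' ⟨hα0, hα.2⟩]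

lemma avar_convex_comb (hZ : Integrable Z stdP) (hZ' : Integrable Z' stdP)
    {t α : ℝ} (ht : t ∈ Icc 0 1) (hα : α ∈ Ico 0 1) :
    avar (fun ω => t * Z ω + (1 - t) * Z' ω) α ≤ t * avar Z α + (1 - t) * avar Z' α := by
  have h := mul_le_mul_of_nonneg_left (setIntegral_quant_Ioc_convex hZ hZ' ht hα)
    (inv_nonneg.2 (sub_nonneg.2 hα.2.le))
  simp only [avar]
  linarith

end AVaR

lemma exists_linearMap_le_eq {E : Type*} [AddCommGroup E] [Module ℝ E] {N : E → ℝ}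
    (N_hom : ∀ c : ℝ, 0 < c → ∀ x, N (c • x) = c * N x) (N_add : ∀ x y, N (x + y) ≤ N x + N y)
    (x₀ : E) : ∃ g : E →ₗ[ℝ] ℝ, (∀ x, g x ≤ N x) ∧ g x₀ = N x₀ := by
  have N_zero : N 0 = 0 := by
    have h := N_hom 2 two_pos 0
    rw [smul_zero] at h
    linarith
  have hle : ∀ c : ℝ, c * N x₀ ≤ N (c • x₀) := by
    intro c
    rcases lt_trichotomy c 0 with hc | rfl | hc
    · have := N_add (c • x₀) ((-c) • x₀)
      rw [← add_smul, add_neg_cancel, zero_smul, N_zero, N_hom _ (neg_pos.2 hc)] at this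
      linarith
    · simp [N_zero]
    · rw [N_hom c hc]
  let f := LinearPMap.mkSpanSingleton' (σ := RingHom.id ℝ) x₀ (N x₀) fun c hc => by
    have h₁ := hle c
    have h₂ := hle (-c)
    rw [hc, N_zero] at h₁
    rw [neg_smul, hc, neg_zero, N_zero] at h₂
    simp only [RingHom.id_apply, smul_eq_mul]
    linarith
  have hf : ∀ x : f.domain, f x ≤ N x := by
    rintro ⟨x, hx⟩
    obtain ⟨c, rfl⟩ := Submodule.mem_span_singleton.1 hx
    simpa only [f, LinearPMap.mkSpanSingleton'_apply, RingHom.id_apply, smul_eq_mul] using hle c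
  obtain ⟨g, hgf, hgN⟩ := exists_extension_of_le_sublinear f N N_hom N_add hf
  exact ⟨g, hgN, (hgf ⟨x₀, Submodule.mem_span_singleton_self x₀⟩).trans
    (LinearPMap.mkSpanSingleton'_apply_self _ _ _ _)⟩

section FiniteRiskMeasure

variable {n : ℕ} {ϱ : (Fin n → ℝ) → ℝ}

def subgradients (ϱ : (Fin n → ℝ) → ℝ) : Set (Fin n → ℝ) := {q | ∀ Y, q ⬝ᵥ Y ≤ ϱ Y}

lemma rho_zero (hhom : ∀ Y : Fin n → ℝ, ∀ t : ℝ, 0 ≤ t → ϱ (fun i => t * Y i) = t * ϱ Y) :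
    ϱ 0 = 0 := by
  have h := hhom 0 0 le_rfl
  simp only [zero_mul] at h
  exact h

lemma exists_mem_subgradients_dotProduct_eq
    (hconv : ∀ Y Y' : Fin n → ℝ, ∀ t : ℝ, t ∈ Icc (0:ℝ) 1 →
      ϱ (fun i => t * Y i + (1 - t) * Y' i) ≤ t * ϱ Y + (1 - t) * ϱ Y')
    (hhom : ∀ Y : Fin n → ℝ, ∀ t : ℝ, 0 ≤ t → ϱ (fun i => t * Y i) = t * ϱ Y) (Y₀ : Fin n → ℝ) :
    ∃ q ∈ subgradients ϱ, q ⬝ᵥ Y₀ = ϱ Y₀ := by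
  have hsmul : ∀ c : ℝ, 0 < c → ∀ Y, ϱ (c • Y) = c * ϱ Y := fun c hc Y => hhom Y c hc.le
  have hadd : ∀ Y Y', ϱ (Y + Y') ≤ ϱ Y + ϱ Y' := fun Y Y' => by
    have h := hconv Y Y' (1 / 2) ⟨by norm_num, by norm_num⟩
    have h2 := hsmul 2 two_pos fun i => 1 / 2 * Y i + (1 - 1 / 2) * Y' i
    have hYY : (2 : ℝ) • (fun i => 1 / 2 * Y i + (1 - 1 / 2) * Y' i) = Y + Y' := by
      ext i; simp only [Pi.smul_apply, Pi.add_apply, smul_eq_mul]; ring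
    rw [hYY] at h2
    linarith
  obtain ⟨g, hg, hgY₀⟩ := exists_linearMap_le_eq hsmul hadd Y₀
  have hdot : ∀ Y, (fun i => g fun j => if i = j then 1 else 0) ⬝ᵥ Y = g Y := fun Y => by
    simp only [LinearMap.pi_apply_eq_sum_univ g Y, dotProduct, smul_eq_mul, mul_comm]
  exact ⟨_, fun Y => (hdot Y).trans_le (hg Y), (hdot Y₀).trans hgY₀⟩

lemma nonneg_of_mem_subgradients (hmono : ∀ Y Y' : Fin n → ℝ, (∀ i, Y' i ≤ Y i) → ϱ Y' ≤ ϱ Y)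
    (hhom : ∀ Y : Fin n → ℝ, ∀ t : ℝ, 0 ≤ t → ϱ (fun i => t * Y i) = t * ϱ Y)
    {q : Fin n → ℝ} (hq : q ∈ subgradients ϱ) (i : Fin n) : 0 ≤ q i := by
  have h := (hq (-Pi.single i 1)).trans
    (hmono 0 _ fun j => by by_cases h : j = i <;> simp [h])
  rw [rho_zero hhom, dotProduct_neg, dotProduct_single, mul_one] at h
  linarith

lemma sum_eq_one_of_mem_subgradients
    (htrans : ∀ Y : Fin n → ℝ, ∀ a : ℝ, ϱ (fun i => Y i + a) = ϱ Y + a)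
    (hhom : ∀ Y : Fin n → ℝ, ∀ t : ℝ, 0 ≤ t → ϱ (fun i => t * Y i) = t * ϱ Y)
    {q : Fin n → ℝ} (hq : q ∈ subgradients ϱ) : ∑ i, q i = 1 := by
  have hconst : ∀ a : ℝ, (∑ i, q i) * a ≤ a := fun a => by
    have h := hq fun _ => a
    have hρ := htrans 0 a
    simp only [Pi.zero_apply, zero_add, rho_zero hhom] at hρ
    rwa [dotProduct, ← Finset.sum_mul, hρ] at h
  linarith [hconst 1, hconst (-1)]

lemma comp_perm_mem_subgradients (hli : ∀ Y : Fin n → ℝ, ∀ e : Equiv.Perm (Fin n), ϱ (Y ∘ e) = ϱ Y)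
    {q : Fin n → ℝ} (hq : q ∈ subgradients ϱ) (e : Equiv.Perm (Fin n)) :
    q ∘ e ∈ subgradients ϱ := fun Y => by
  rw [← dotProduct_comp_equiv_symm, ← hli Y e.symm]
  exact hq _

/-- Sorting a subgradient increasingly only increases its pairing with an increasing vector
(rearrangement inequality). -/
lemma exists_monotone_mem_subgradients_dotProduct_eq
    (hconv : ∀ Y Y' : Fin n → ℝ, ∀ t : ℝ, t ∈ Icc (0:ℝ) 1 →
      ϱ (fun i => t * Y i + (1 - t) * Y' i) ≤ t * ϱ Y + (1 - t) * ϱ Y')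
    (hhom : ∀ Y : Fin n → ℝ, ∀ t : ℝ, 0 ≤ t → ϱ (fun i => t * Y i) = t * ϱ Y)
    (hli : ∀ Y : Fin n → ℝ, ∀ e : Equiv.Perm (Fin n), ϱ (Y ∘ e) = ϱ Y)
    {V : Fin n → ℝ} (hV : Monotone V) :
    ∃ q ∈ subgradients ϱ, Monotone q ∧ q ⬝ᵥ V = ϱ V := by
  obtain ⟨q₀, hq₀, hq₀V⟩ := exists_mem_subgradients_dotProduct_eq hconv hhom V
  set σ := Tuple.sort q₀
  have hq := comp_perm_mem_subgradients hli hq₀ σ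
  refine ⟨q₀ ∘ σ, hq, Tuple.monotone_sort q₀, le_antisymm (hq V) ?_⟩
  have h := (hV.monovary (Tuple.monotone_sort q₀)).sum_mul_comp_perm_le_sum_mul (σ := σ⁻¹)
  simp only [Function.comp_apply, σ, Equiv.Perm.inv_def, Equiv.apply_symm_apply] at h
  rw [← hq₀V, dotProduct_comm, dotProduct_comm _ V]
  exact h

end FiniteRiskMeasure

section KusuokaMeasure

open Finset in
lemma sum_mul_sum_Ico_eq (d b : ℕ → ℝ) (n : ℕ) :
    ∑ j ∈ range n, d j * ∑ i ∈ Ico j n, b i = ∑ i ∈ range n, (∑ j ∈ range (i + 1), d j) * b i := by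
  simp only [mul_sum, sum_mul]
  refine sum_comm' fun j i => ?_
  simp only [Finset.mem_range, Finset.mem_Ico]
  omega

variable {n : ℕ}

def shiftedSeq (q : Fin n → ℝ) : ℕ → ℝ
  | 0 => 0
  | j + 1 => if h : j < n then q ⟨j, h⟩ else 0

lemma sum_shiftedSeq_sub_mul_sum_Ico (q : Fin n → ℝ) (b : ℕ → ℝ) :
    ∑ j ∈ Finset.range n, (shiftedSeq q (j + 1) - shiftedSeq q j) * ∑ i ∈ Finset.Ico j n, b i =
      ∑ i : Fin n, q i * b i := by
  rw [sum_mul_sum_Ico_eq, ← Fin.sum_univ_eq_sum_range]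
  refine Finset.sum_congr rfl fun i _ => ?_
  rw [Finset.sum_range_sub, shiftedSeq, shiftedSeq, dif_pos i.isLt, sub_zero]

def kusuokaWeight (q : Fin n → ℝ) (j : ℕ) : ℝ := (n - j) * (shiftedSeq q (j + 1) - shiftedSeq q j)

/-- The atom at `j / n` has mass `(1 - j / n) · n (q_j - q_{j-1})`, with `q_{-1} = 0`: the
factor `1 - j / n` cancels the normalisation of `AV@R_{j/n}`, so that integrating `AV@R` against
this measure recovers `q ⬝ᵥ Y` for sorted `Y` (Abel summation). -/
def kusuokaMeasure (q : Fin n → ℝ) : Measure ℝ :=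
  ∑ j ∈ Finset.range n, ENNReal.ofReal (kusuokaWeight q j) • Measure.dirac ((j : ℝ) / n)

lemma sum_kusuokaWeight (q : Fin n → ℝ) :
    ∑ j ∈ Finset.range n, kusuokaWeight q j = ∑ i, q i := by
  have h := sum_shiftedSeq_sub_mul_sum_Ico q (fun _ => 1)
  simp only [Finset.sum_const, Nat.card_Ico, nsmul_eq_mul, mul_one] at h
  rw [← h]
  refine Finset.sum_congr rfl fun j hj => ?_
  rw [kusuokaWeight, Nat.cast_sub (Finset.mem_range.1 hj).le, mul_comm]

variable {q : Fin n → ℝ}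

lemma kusuokaWeight_nonneg (hq : ∀ i, 0 ≤ q i) (hqm : Monotone q) {j : ℕ} (hj : j < n) :
    0 ≤ kusuokaWeight q j := by
  refine mul_nonneg (sub_nonneg.2 (by exact_mod_cast hj.le)) (sub_nonneg.2 ?_)
  cases j with
  | zero => simpa [shiftedSeq, hj] using hq _
  | succ j => simpa [shiftedSeq, hj, (Nat.lt_succ_self j).trans hj] using hqm (Nat.le_succ j)

lemma integral_kusuokaMeasure (hq : ∀ i, 0 ≤ q i) (hqm : Monotone q) (f : ℝ → ℝ) :
    ∫ α, f α ∂kusuokaMeasure q = ∑ j ∈ Finset.range n, kusuokaWeight q j * f (j / n) := by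
  rw [kusuokaMeasure, integral_finsetSum_measure fun j _ =>
    (integrable_dirac (by simp)).smul_measure ENNReal.ofReal_ne_top]
  refine Finset.sum_congr rfl fun j hj => ?_
  rw [integral_smul_measure, integral_dirac, smul_eq_mul,
    ENNReal.toReal_ofReal (kusuokaWeight_nonneg hq hqm (Finset.mem_range.1 hj))]

lemma isP01_kusuokaMeasure (hq : ∀ i, 0 ≤ q i) (hqm : Monotone q) (hq₁ : ∑ i, q i = 1) :
    IsP01 (kusuokaMeasure q) := by
  have hatom : ∀ j ∈ Finset.range n, (j : ℝ) / n ∈ Ico 0 1 := fun j hj => by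
    have hj := Finset.mem_range.1 hj
    have hn : (0 : ℝ) < n := by exact_mod_cast (Nat.zero_le j).trans_lt hj
    exact ⟨by positivity, (div_lt_one hn).2 (by exact_mod_cast hj)⟩
  have hnull : ∀ s : Set ℝ, MeasurableSet s → (∀ x ∈ Ico (0 : ℝ) 1, x ∉ s) →
      kusuokaMeasure q s = 0 := fun s hs hsx => by
    simp only [kusuokaMeasure, Measure.coe_finsetSum, Finset.sum_apply, Measure.smul_apply,
      Measure.dirac_apply' _ hs, smul_eq_mul]
    exact Finset.sum_eq_zero fun j hj => by simp [hsx _ (hatom j hj)]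
  refine ⟨⟨?_⟩, hnull _ measurableSet_Icc.compl fun x hx h => h (Ico_subset_Icc_self hx),
    hnull _ (measurableSet_singleton 1) fun x hx h => hx.2.ne h⟩
  simp only [kusuokaMeasure, Measure.coe_finsetSum, Finset.sum_apply, Measure.smul_apply,
    measure_univ, smul_eq_mul, mul_one]
  rw [← ENNReal.ofReal_sum_of_nonneg fun j hj =>
    kusuokaWeight_nonneg hq hqm (Finset.mem_range.1 hj), sum_kusuokaWeight, hq₁, ENNReal.ofReal_one]

end KusuokaMeasure

section BlockAverage

variable {n : ℕ}

def blockAvg (n : ℕ) (g : ℝ → ℝ) (k : Fin n) : ℝ :=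
  n * ∫ τ in ((k : ℕ) / n : ℝ)..(((k : ℕ) + 1) / n), g τ

lemma block_bounds (k : Fin n) :
    0 ≤ ((k : ℕ) / n : ℝ) ∧ ((k : ℕ) / n : ℝ) < ((k : ℕ) + 1) / n ∧
      (((k : ℕ) + 1) / n : ℝ) ≤ 1 := by
  have hn : (0 : ℝ) < n := by exact_mod_cast k.pos
  have hk : ((k : ℕ) : ℝ) + 1 ≤ n := by exact_mod_cast k.isLt
  exact ⟨by positivity, by gcongr; linarith, (div_le_one hn).2 hk⟩

lemma block_subset (k : Fin n) :
    Ioo ((k : ℕ) / n : ℝ) (((k : ℕ) + 1) / n) ⊆ Ioo 0 1 :=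
  have ⟨h₀, _, h₁⟩ := block_bounds k
  Ioo_subset_Ioo h₀ h₁

lemma intervalIntegrable_block {g : ℝ → ℝ} (hg : IntegrableOn g (Ioo 0 1)) (k : Fin n) :
    IntervalIntegrable g volume ((k : ℕ) / n) (((k : ℕ) + 1) / n) :=
  (intervalIntegrable_iff_integrableOn_Ioo_of_le (block_bounds k).2.1.le).2
    (hg.mono_set (block_subset k))

lemma blockAvg_congr {g g' : ℝ → ℝ} {k : Fin n}
    (h : ∀ τ ∈ Ioo ((k : ℕ) / n : ℝ) (((k : ℕ) + 1) / n), g τ = g' τ) :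
    blockAvg n g k = blockAvg n g' k := by
  simp only [blockAvg, intervalIntegral.integral_of_le (block_bounds k).2.1.le,
    integral_Ioc_eq_integral_Ioo, setIntegral_congr_fun measurableSet_Ioo h]

lemma blockAvg_const (c : ℝ) (k : Fin n) : blockAvg n (fun _ => c) k = c := by
  have hn : (n : ℝ) ≠ 0 := by exact_mod_cast k.pos.ne'
  rw [blockAvg, intervalIntegral.integral_const, smul_eq_mul]
  field_simp
  ring

lemma blockAvg_mono {g g' : ℝ → ℝ} {k : Fin n}
    (hg : IntervalIntegrable g volume ((k : ℕ) / n) (((k : ℕ) + 1) / n))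
    (hg' : IntervalIntegrable g' volume ((k : ℕ) / n) (((k : ℕ) + 1) / n))
    (h : ∀ τ ∈ Ioo ((k : ℕ) / n : ℝ) (((k : ℕ) + 1) / n), g τ ≤ g' τ) :
    blockAvg n g k ≤ blockAvg n g' k :=
  mul_le_mul_of_nonneg_left
    (intervalIntegral.integral_mono_on_of_le_Ioo (block_bounds k).2.1.le hg hg' h) (by positivity)

lemma blockAvg_add_const {g : ℝ → ℝ} {k : Fin n}
    (hg : IntervalIntegrable g volume ((k : ℕ) / n) (((k : ℕ) + 1) / n)) (a : ℝ) :
    blockAvg n (fun τ => g τ + a) k = blockAvg n g k + a := by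
  have h := blockAvg_const a k
  rw [blockAvg] at h ⊢
  rw [intervalIntegral.integral_add hg intervalIntegrable_const, mul_add, h, blockAvg]

lemma blockAvg_const_mul (g : ℝ → ℝ) (c : ℝ) (k : Fin n) :
    blockAvg n (fun τ => c * g τ) k = c * blockAvg n g k := by
  rw [blockAvg, blockAvg, intervalIntegral.integral_const_mul]
  ring

lemma monotone_blockAvg {g : ℝ → ℝ} (hg : IntegrableOn g (Ioo 0 1))
    (hmono : MonotoneOn g (Ioo 0 1)) : Monotone (blockAvg n g) := by
  intro i j hij
  rcases hij.lt_or_eq with hlt | rfl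
  · have hij : ((i : ℕ) + 1 : ℝ) ≤ (j : ℕ) := by exact_mod_cast Fin.lt_def.1 hlt
    have hc : ((i : ℕ) + 1 : ℝ) / n ∈ Ioo 0 1 :=
      ⟨(block_bounds i).1.trans_lt (block_bounds i).2.1,
        (div_le_div_of_nonneg_right hij (Nat.cast_nonneg n)).trans_lt
        ((block_bounds j).2.1.trans_le (block_bounds j).2.2)⟩
    set c := g (((i : ℕ) + 1 : ℝ) / n)
    calc blockAvg n g i ≤ blockAvg n (fun _ => c) i :=
          blockAvg_mono (intervalIntegrable_block hg i) intervalIntegrable_const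
            fun τ hτ => hmono (block_subset i hτ) hc hτ.2.le
      _ = blockAvg n (fun _ => c) j := by rw [blockAvg_const, blockAvg_const]
      _ ≤ blockAvg n g j :=
          blockAvg_mono intervalIntegrable_const (intervalIntegrable_block hg j)
            fun τ hτ => hmono hc (block_subset j hτ)
              ((div_le_div_of_nonneg_right hij (Nat.cast_nonneg n)).trans hτ.1.le)
  · exact le_rfl

/-- Abel summation. -/
lemma dotProduct_blockAvg (q : Fin n → ℝ) {g : ℝ → ℝ}
    (hg : ∀ k : Fin n, IntervalIntegrable g volume ((k : ℕ) / n) (((k : ℕ) + 1) / n)) :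
    q ⬝ᵥ blockAvg n g = ∑ j ∈ Finset.range n,
      kusuokaWeight q j * ((1 - (j : ℝ) / n)⁻¹ * ∫ τ in Ioc ((j : ℝ) / n) 1, g τ) := by
  have htail : ∀ j ∈ Finset.range n, kusuokaWeight q j *
      ((1 - (j : ℝ) / n)⁻¹ * ∫ τ in Ioc ((j : ℝ) / n) 1, g τ) =
      (shiftedSeq q (j + 1) - shiftedSeq q j) *
        ∑ i ∈ Finset.Ico j n, n * ∫ τ in ((i : ℝ) / n)..(((i + 1 : ℕ) : ℝ) / n), g τ := by
    intro j hj
    have hjn := Finset.mem_range.1 hj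
    have hn : (n : ℝ) ≠ 0 := by exact_mod_cast ((Nat.zero_le j).trans_lt hjn).ne'
    have hj1 : (j : ℝ) / n ≤ 1 := (div_le_one₀ (by positivity)).2 (by exact_mod_cast hjn.le)
    have hnj : (n : ℝ) - j ≠ 0 := sub_ne_zero.2 (by exact_mod_cast hjn.ne')
    rw [← Finset.mul_sum, intervalIntegral.sum_integral_adjacent_intervals_Ico
      (a := fun i : ℕ => (i : ℝ) / n) hjn.le fun i hi => by
        simpa using hg ⟨i, hi.2⟩, div_self hn,
      intervalIntegral.integral_of_le hj1, kusuokaWeight]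
    field_simp
  rw [Finset.sum_congr rfl htail, sum_shiftedSeq_sub_mul_sum_Ico]
  simp only [dotProduct, blockAvg, Nat.cast_add, Nat.cast_one]

end BlockAverage

section FiniteQuantile

variable {n : ℕ}

lemma cdfFinW_comp_perm (c : ℝ) (Y : Fin n → ℝ) (σ : Equiv.Perm (Fin n)) :
    cdfFinW (fun _ => c) (Y ∘ σ) = cdfFinW (fun _ => c) Y := by
  ext t
  simp only [cdfFinW, Finset.sum_filter]
  exact Equiv.sum_comp σ fun i => if Y i ≤ t then c else 0

lemma card_filter_le_iff_lt {V : Fin n → ℝ} (hV : Monotone V) (j : Fin n) (t : ℝ) :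
    (Finset.univ.filter fun i => V i ≤ t).card ≤ j ↔ t < V j := by
  constructor
  · intro hcard
    by_contra! hjt
    have := Finset.card_le_card fun i (hi : i ∈ Finset.Iic j) =>
      Finset.mem_filter.2 ⟨Finset.mem_univ i, (hV (Finset.mem_Iic.1 hi)).trans hjt⟩
    rw [Fin.card_Iic] at this
    omega
  · intro htj
    have := Finset.card_le_card fun i (hi : i ∈ Finset.univ.filter fun i => V i ≤ t) =>
      Finset.mem_Iio.2 (hV.reflect_lt ((Finset.mem_filter.1 hi).2.trans_lt htj))
    rwa [Fin.card_Iio] at this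

lemma quantFinW_eq (Y : Fin n → ℝ) (j : Fin n) {τ : ℝ}
    (hτ : τ ∈ Ico ((j : ℕ) / n : ℝ) (((j : ℕ) + 1) / n)) :
    quantFinW (fun _ => 1 / n) Y τ = (Y ∘ Tuple.sort Y) j := by
  have hn : (0 : ℝ) < n := by exact_mod_cast j.pos
  have hset : {t | cdfFinW (fun _ => 1 / n) Y t ≤ τ} = Iio ((Y ∘ Tuple.sort Y) j) := by
    ext t
    rw [mem_ofPred_eq, mem_Iio, ← card_filter_le_iff_lt (Tuple.monotone_sort Y),
      ← cdfFinW_comp_perm _ Y (Tuple.sort Y), cdfFinW, Finset.sum_const, nsmul_eq_mul,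
      mul_one_div, div_le_iff₀ hn]
    have hτ₁ : ((j : ℕ) : ℝ) ≤ τ * n := (div_le_iff₀ hn).1 hτ.1
    have hτ₂ : τ * n < (j : ℕ) + 1 := (lt_div_iff₀ hn).1 hτ.2
    constructor
    · intro h
      exact Nat.lt_succ_iff.1 (by exact_mod_cast h.trans_lt hτ₂)
    · intro h
      exact (Nat.cast_le.2 h).trans hτ₁
  rw [quantFinW, hset, csSup_Iio]

lemma quant_eq_quantFinW {pr : Fin n → ℝ} {Y : Fin n → ℝ} {Z : ℝ → ℝ}
    (h : cdf Z = cdfFinW pr Y) : quant Z = quantFinW pr Y :=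
  funext fun τ => by rw [quant, quantFinW, h]

lemma blockAvg_quantFinW (Y : Fin n → ℝ) :
    blockAvg n (quantFinW (fun _ => 1 / n) Y) = Y ∘ Tuple.sort Y := by
  ext k
  rw [blockAvg_congr fun τ hτ => quantFinW_eq Y k (Ioo_subset_Ico_self hτ), blockAvg_const]

lemma intervalIntegrable_quantFinW (Y : Fin n → ℝ) (k : Fin n) :
    IntervalIntegrable (quantFinW (fun _ => 1 / n) Y) volume ((k : ℕ) / n) (((k : ℕ) + 1) / n) :=
  (intervalIntegrable_iff_integrableOn_Ioo_of_le (block_bounds k).2.1.le).2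
    ((integrableOn_const (by simp [Real.volume_Ioo])).congr_fun
      (fun τ hτ => (quantFinW_eq Y k (Ioo_subset_Ico_self hτ)).symm) measurableSet_Ioo)

lemma integral_avarFinW_kusuokaMeasure {q : Fin n → ℝ} (hq : ∀ i, 0 ≤ q i) (hqm : Monotone q)
    (Y : Fin n → ℝ) :
    ∫ α, avarFinW (fun _ => 1 / n) Y α ∂kusuokaMeasure q = q ⬝ᵥ (Y ∘ Tuple.sort Y) := by
  rw [integral_kusuokaMeasure hq hqm, ← blockAvg_quantFinW,
    dotProduct_blockAvg q (intervalIntegrable_quantFinW Y)]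
  rfl

end FiniteQuantile

section KusuokaSet

variable {n : ℕ} {ϱ : (Fin n → ℝ) → ℝ}

def kusuokaSet (ϱ : (Fin n → ℝ) → ℝ) : Set (Measure ℝ) :=
  kusuokaMeasure '' {q | q ∈ subgradients ϱ ∧ Monotone q}

lemma isP01_of_mem_kusuokaSet (hmono : ∀ Y Y' : Fin n → ℝ, (∀ i, Y' i ≤ Y i) → ϱ Y' ≤ ϱ Y)
    (htrans : ∀ Y : Fin n → ℝ, ∀ a : ℝ, ϱ (fun i => Y i + a) = ϱ Y + a)
    (hhom : ∀ Y : Fin n → ℝ, ∀ t : ℝ, 0 ≤ t → ϱ (fun i => t * Y i) = t * ϱ Y)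
    {μ : Measure ℝ} (hμ : μ ∈ kusuokaSet ϱ) : IsP01 μ := by
  obtain ⟨q, ⟨hq, hqm⟩, rfl⟩ := hμ
  exact isP01_kusuokaMeasure (nonneg_of_mem_subgradients hmono hhom hq) hqm
    (sum_eq_one_of_mem_subgradients htrans hhom hq)

lemma isLUB_integral_avarFinW_kusuokaSet
    (hmono : ∀ Y Y' : Fin n → ℝ, (∀ i, Y' i ≤ Y i) → ϱ Y' ≤ ϱ Y)
    (hconv : ∀ Y Y' : Fin n → ℝ, ∀ t : ℝ, t ∈ Icc (0:ℝ) 1 →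
      ϱ (fun i => t * Y i + (1 - t) * Y' i) ≤ t * ϱ Y + (1 - t) * ϱ Y')
    (hhom : ∀ Y : Fin n → ℝ, ∀ t : ℝ, 0 ≤ t → ϱ (fun i => t * Y i) = t * ϱ Y)
    (hli : ∀ Y : Fin n → ℝ, ∀ e : Equiv.Perm (Fin n), ϱ (Y ∘ e) = ϱ Y) (Y : Fin n → ℝ) :
    IsLUB {x | ∃ μ ∈ kusuokaSet ϱ, x = ∫ α, avarFinW (fun _ => 1 / n) Y α ∂μ} (ϱ Y) := by
  refine ⟨?_, fun b hb => ?_⟩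
  · rintro _ ⟨_, ⟨q, ⟨hq, hqm⟩, rfl⟩, rfl⟩
    rw [integral_avarFinW_kusuokaMeasure (nonneg_of_mem_subgradients hmono hhom hq) hqm,
      ← hli Y (Tuple.sort Y)]
    exact hq _
  · obtain ⟨q, hq, hqm, hqY⟩ := exists_monotone_mem_subgradients_dotProduct_eq hconv hhom hli
      (Tuple.monotone_sort Y)
    refine hb ⟨_, ⟨q, ⟨hq, hqm⟩, rfl⟩, ?_⟩
    rw [integral_avarFinW_kusuokaMeasure (nonneg_of_mem_subgradients hmono hhom hq) hqm, hqY, hli]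

end KusuokaSet

section Extension

variable {n : ℕ} {Z Z' : ℝ → ℝ}

lemma blockAvg_quant_mono (hZ : Integrable Z stdP) (hZ' : Integrable Z' stdP)
    (h : ∀ᵐ ω ∂stdP, Z' ω ≤ Z ω) : blockAvg n (quant Z') ≤ blockAvg n (quant Z) := fun k =>
  blockAvg_mono (intervalIntegrable_block (integrableOn_quant hZ') k)
    (intervalIntegrable_block (integrableOn_quant hZ) k) fun _ hτ =>
      quant_le_quant_of_cdf_le hZ.aemeasurable hZ'.aemeasurable (cdf_le_cdf_of_ae_le h)
        (block_subset k hτ)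

lemma blockAvg_quant_add_const (hZ : Integrable Z stdP) (a : ℝ) :
    blockAvg n (quant fun ω => Z ω + a) = fun k => blockAvg n (quant Z) k + a := by
  ext k
  rw [blockAvg_congr fun τ hτ => quant_add_const hZ.aemeasurable a (block_subset k hτ),
    blockAvg_add_const (intervalIntegrable_block (integrableOn_quant hZ) k)]

lemma blockAvg_quant_const_mul (hZ : AEMeasurable Z stdP) {t : ℝ} (ht : 0 ≤ t) :
    blockAvg n (quant fun ω => t * Z ω) = fun k => t * blockAvg n (quant Z) k := by
  ext k
  rw [blockAvg_congr fun τ hτ => quant_const_mul hZ ht (block_subset k hτ), blockAvg_const_mul]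

lemma dotProduct_blockAvg_quant_convex {q : Fin n → ℝ} (hq : ∀ i, 0 ≤ q i) (hqm : Monotone q)
    (hZ : Integrable Z stdP) (hZ' : Integrable Z' stdP) {t : ℝ} (ht : t ∈ Icc 0 1) :
    q ⬝ᵥ blockAvg n (quant fun ω => t * Z ω + (1 - t) * Z' ω) ≤
      t * q ⬝ᵥ blockAvg n (quant Z) + (1 - t) * q ⬝ᵥ blockAvg n (quant Z') := by
  have hW : Integrable (fun ω => t * Z ω + (1 - t) * Z' ω) stdP :=
    (hZ.const_mul t).add (hZ'.const_mul (1 - t))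
  rw [dotProduct_blockAvg q (intervalIntegrable_block (integrableOn_quant hW)),
    dotProduct_blockAvg q (intervalIntegrable_block (integrableOn_quant hZ)),
    dotProduct_blockAvg q (intervalIntegrable_block (integrableOn_quant hZ')), Finset.mul_sum,
    Finset.mul_sum, ← Finset.sum_add_distrib]
  refine Finset.sum_le_sum fun j hj => ?_
  have hjn := Finset.mem_range.1 hj
  have hα : (j : ℝ) / n ∈ Ico 0 1 :=
    ⟨by positivity, (div_lt_one (by exact_mod_cast (Nat.zero_le j).trans_lt hjn)).2
      (by exact_mod_cast hjn)⟩
  have h := mul_le_mul_of_nonneg_left (avar_convex_comb hZ hZ' ht hα)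
    (kusuokaWeight_nonneg hq hqm hjn)
  simp only [avar] at h
  linarith

lemma rho_blockAvg_quant_convex {ϱ : (Fin n → ℝ) → ℝ}
    (hmono : ∀ Y Y' : Fin n → ℝ, (∀ i, Y' i ≤ Y i) → ϱ Y' ≤ ϱ Y)
    (hconv : ∀ Y Y' : Fin n → ℝ, ∀ t : ℝ, t ∈ Icc (0:ℝ) 1 →
      ϱ (fun i => t * Y i + (1 - t) * Y' i) ≤ t * ϱ Y + (1 - t) * ϱ Y')
    (hhom : ∀ Y : Fin n → ℝ, ∀ t : ℝ, 0 ≤ t → ϱ (fun i => t * Y i) = t * ϱ Y)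
    (hli : ∀ Y : Fin n → ℝ, ∀ e : Equiv.Perm (Fin n), ϱ (Y ∘ e) = ϱ Y)
    (hZ : Integrable Z stdP) (hZ' : Integrable Z' stdP) {t : ℝ} (ht : t ∈ Icc 0 1) :
    ϱ (blockAvg n (quant fun ω => t * Z ω + (1 - t) * Z' ω)) ≤
      t * ϱ (blockAvg n (quant Z)) + (1 - t) * ϱ (blockAvg n (quant Z')) := by
  have hW : Integrable (fun ω => t * Z ω + (1 - t) * Z' ω) stdP :=
    (hZ.const_mul t).add (hZ'.const_mul (1 - t))
  obtain ⟨q, hq, hqm, hqW⟩ := exists_monotone_mem_subgradients_dotProduct_eq hconv hhom hli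
    (monotone_blockAvg (n := n) (integrableOn_quant hW) (monotoneOn_quant hW.aemeasurable))
  calc ϱ (blockAvg n (quant fun ω => t * Z ω + (1 - t) * Z' ω))
      = q ⬝ᵥ blockAvg n (quant fun ω => t * Z ω + (1 - t) * Z' ω) := hqW.symm
    _ ≤ t * q ⬝ᵥ blockAvg n (quant Z) + (1 - t) * q ⬝ᵥ blockAvg n (quant Z') :=
        dotProduct_blockAvg_quant_convex (nonneg_of_mem_subgradients hmono hhom hq) hqm hZ hZ' ht
    _ ≤ t * ϱ (blockAvg n (quant Z)) + (1 - t) * ϱ (blockAvg n (quant Z')) :=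
        add_le_add (mul_le_mul_of_nonneg_left (hq _) ht.1)
          (mul_le_mul_of_nonneg_left (hq _) (sub_nonneg.2 ht.2))

end Extension

theorem finite_equal_probabilities_regular_general
    (n : ℕ) (ϱ : (Fin n → ℝ) → ℝ)
    (hmono : ∀ Y Y' : Fin n → ℝ, (∀ i, Y' i ≤ Y i) → ϱ Y' ≤ ϱ Y)
    (hconv : ∀ Y Y' : Fin n → ℝ, ∀ t : ℝ, t ∈ Icc (0:ℝ) 1 →
      ϱ (fun i => t * Y i + (1 - t) * Y' i) ≤ t * ϱ Y + (1 - t) * ϱ Y')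
    (htrans : ∀ Y : Fin n → ℝ, ∀ a : ℝ, ϱ (fun i => Y i + a) = ϱ Y + a)
    (hhom : ∀ Y : Fin n → ℝ, ∀ t : ℝ, 0 ≤ t → ϱ (fun i => t * Y i) = t * ϱ Y)
    (hli : ∀ Y : Fin n → ℝ, ∀ e : Equiv.Perm (Fin n), ϱ (Y ∘ e) = ϱ Y) :
    (∃ p : ℝ≥0∞, 1 ≤ p ∧ p ≠ ∞ ∧ ∃ ρ : (ℝ → ℝ) → ℝ,
      IsCoherent p ρ ∧ IsLawInvariant p ρ ∧
      ∀ Y : Fin n → ℝ, ∀ Z : ℝ → ℝ, MemLp Z p stdP →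
        cdf Z = cdfFinW (fun _ => (1:ℝ)/n) Y → ρ Z = ϱ Y) ∧
    (∃ M : Set (Measure ℝ), (∀ μ ∈ M, IsP01 μ) ∧
      ∀ Y : Fin n → ℝ,
        IsLUB {x : ℝ | ∃ μ ∈ M, x = ∫ α, avarFinW (fun _ => (1:ℝ)/n) Y α ∂μ} (ϱ Y)) := by
  refine ⟨⟨1, le_rfl, ENNReal.one_ne_top, fun Z => ϱ (blockAvg n (quant Z)),
      ⟨?_, ?_, ?_, ?_⟩, ?_, ?_⟩,
    kusuokaSet ϱ, fun μ hμ => isP01_of_mem_kusuokaSet hmono htrans hhom hμ,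
    isLUB_integral_avarFinW_kusuokaSet hmono hconv hhom hli⟩
  · intro Z Z' hZ hZ' h
    exact hmono _ _ (blockAvg_quant_mono (memLp_one_iff_integrable.1 hZ)
      (memLp_one_iff_integrable.1 hZ') h)
  · intro Z Z' t hZ hZ' ht
    exact rho_blockAvg_quant_convex hmono hconv hhom hli (memLp_one_iff_integrable.1 hZ)
      (memLp_one_iff_integrable.1 hZ') ht
  · intro Z a hZ
    simp only [blockAvg_quant_add_const (memLp_one_iff_integrable.1 hZ), htrans]
  · intro Z t hZ ht
    simp only [blockAvg_quant_const_mul hZ.1.aemeasurable ht, hhom _ t ht]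
  · intro Z Z' _ _ h
    simp only [quant_congr h]
  · intro Y Z _ h
    simp only [quant_eq_quantFinW h, blockAvg_quantFinW, hli]

/-- On a finite probability space with equal probabilities `1/n`,
every law invariant coherent risk measure is regular and admits a Kusuoka
representation. -/
theorem finite_equal_probabilities_regular
    (n : ℕ) (hn : 0 < n) (ϱ : (Fin n → ℝ) → ℝ)
    (hmono : ∀ Y Y' : Fin n → ℝ, (∀ i, Y' i ≤ Y i) → ϱ Y' ≤ ϱ Y)
    (hconv : ∀ Y Y' : Fin n → ℝ, ∀ t : ℝ, t ∈ Icc (0:ℝ) 1 →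
      ϱ (fun i => t * Y i + (1 - t) * Y' i) ≤ t * ϱ Y + (1 - t) * ϱ Y')
    (htrans : ∀ Y : Fin n → ℝ, ∀ a : ℝ, ϱ (fun i => Y i + a) = ϱ Y + a)
    (hhom : ∀ Y : Fin n → ℝ, ∀ t : ℝ, 0 ≤ t → ϱ (fun i => t * Y i) = t * ϱ Y)
    (hli : ∀ Y : Fin n → ℝ, ∀ e : Equiv.Perm (Fin n), ϱ (Y ∘ e) = ϱ Y) :
    (∃ p : ℝ≥0∞, 1 ≤ p ∧ p ≠ ∞ ∧ ∃ ρ : (ℝ → ℝ) → ℝ,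
      IsCoherent p ρ ∧ IsLawInvariant p ρ ∧
      ∀ Y : Fin n → ℝ, ∀ Z : ℝ → ℝ, MemLp Z p stdP →
        cdf Z = cdfFinW (fun _ => (1:ℝ)/n) Y → ρ Z = ϱ Y) ∧
    (∃ M : Set (Measure ℝ), (∀ μ ∈ M, IsP01 μ) ∧
      ∀ Y : Fin n → ℝ,
        IsLUB {x : ℝ | ∃ μ ∈ M, x = ∫ α, avarFinW (fun _ => (1:ℝ)/n) Y α ∂μ} (ϱ Y)) :=
  finite_equal_probabilities_regular_general n ϱ hmono hconv htrans hhom hli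

end
end

section
/- Let μ_1, μ_2 ∈ 𝔓_q with μ_1 dominated in first stochastic order by μ_2 (μ_1(α) ≥ μ_2(α) for all α). Then 𝕋μ_1 is majorized by 𝕋μ_2: ∫_γ^1 (𝕋μ_1)(t)dt ≤ ∫_γ^1 (𝕋μ_2)(t)dt for all γ ∈ [0,1], and ∫₀¹(𝕋μ_1)(t)dt = ∫₀¹(𝕋μ_2)(t)dt. -/
open MeasureTheory Set Filter Topology
open scoped ENNReal

noncomputable section

/-! Tonelli gives `∫_γ^1 𝕋μ = ∫ g_γ dμ` with `g_γ(α) = (1 - γ) / (1 - min α γ)`, and `g_0 = 1` on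
`[0,1)`. Each `g_γ` is continuous and nondecreasing, so by the layer cake formula `∫ g_γ dμ` is an
integral of the masses of open upper sets of `ℝ`; such a set is a directed countable union of rays
`(q, ∞)`, whose masses first-order dominance compares. -/

lemma IsP01.ae_mem_Ico {μ : Measure ℝ} (h : IsP01 μ) : ∀ᵐ α ∂μ, α ∈ Ico (0:ℝ) 1 := by
  refine ae_iff.2 (measure_mono_null (fun x hx => ?_) (measure_union_null h.2.1 h.2.2))
  by_cases hx1 : x = 1
  · exact Or.inr hx1
  · exact Or.inl fun ⟨h0, h1⟩ => hx ⟨h0, lt_of_le_of_ne h1 hx1⟩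

lemma IsOpen.eq_iUnion_Ioi_rat_of_isUpperSet {U : Set ℝ} (hU : IsOpen U) (hU' : IsUpperSet U) :
    U = ⋃ q : {q : ℚ // (q : ℝ) ∈ U}, Ioi (q : ℝ) := by
  ext x
  simp only [mem_iUnion, mem_Ioi, Subtype.exists, exists_prop]
  constructor
  · intro hx
    obtain ⟨l, hlx, hl⟩ := exists_Ioc_subset_of_mem_nhds (hU.mem_nhds hx) ⟨x - 1, by linarith⟩
    obtain ⟨q, hlq, hqx⟩ := exists_rat_btwn hlx
    exact ⟨q, hl ⟨hlq, hqx.le⟩, hqx⟩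
  · rintro ⟨q, hq, hqx⟩
    exact hU' hqx.le hq

section FSD

variable {μ ν : Measure ℝ} [IsProbabilityMeasure μ] [IsProbabilityMeasure ν]

lemma FSD.measure_Ioi_le (h : FSD μ ν) (x : ℝ) : μ (Ioi x) ≤ ν (Ioi x) := by
  rw [← compl_Iic, prob_compl_eq_one_sub measurableSet_Iic, prob_compl_eq_one_sub measurableSet_Iic]
  exact tsub_le_tsub_left
    ((ENNReal.toReal_le_toReal (measure_ne_top _ _) (measure_ne_top _ _)).1 (h x)) 1

lemma FSD.measure_le_of_isOpen_of_isUpperSet (h : FSD μ ν) {U : Set ℝ} (hU : IsOpen U)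
    (hU' : IsUpperSet U) : μ U ≤ ν U := by
  have hdir : Directed (· ⊆ ·) fun q : {q : ℚ // (q : ℝ) ∈ U} => Ioi (q : ℝ) :=
    Antitone.directed_le fun _ _ hpq => Ioi_subset_Ioi (by exact_mod_cast hpq)
  rw [hU.eq_iUnion_Ioi_rat_of_isUpperSet hU', hdir.measure_iUnion, hdir.measure_iUnion]
  exact iSup_mono fun q => h.measure_Ioi_le q

lemma FSD.lintegral_le_of_monotone (h : FSD μ ν) {f : ℝ → ℝ} (hf : Monotone f)
    (hfc : Continuous f) (hf0 : 0 ≤ f) :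
    ∫⁻ α, ENNReal.ofReal (f α) ∂μ ≤ ∫⁻ α, ENNReal.ofReal (f α) ∂ν := by
  rw [lintegral_eq_lintegral_meas_lt μ (ae_of_all _ hf0) hfc.measurable.aemeasurable,
    lintegral_eq_lintegral_meas_lt ν (ae_of_all _ hf0) hfc.measurable.aemeasurable]
  exact lintegral_mono fun s => h.measure_le_of_isOpen_of_isUpperSet
    (isOpen_lt continuous_const hfc) fun _ _ hab hs => hs.trans_le (hf hab)

lemma FSD.integral_le_of_monotone (h : FSD μ ν) {f : ℝ → ℝ} (hf : Monotone f)
    (hfc : Continuous f) (hf0 : 0 ≤ f) (hfi : Integrable f ν) : ∫ α, f α ∂μ ≤ ∫ α, f α ∂ν := by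
  rw [integral_eq_lintegral_of_nonneg_ae (ae_of_all _ hf0) hfc.aestronglyMeasurable,
    integral_eq_lintegral_of_nonneg_ae (ae_of_all _ hf0) hfc.aestronglyMeasurable]
  exact ENNReal.toReal_mono hfi.lintegral_lt_top.ne (h.lintegral_le_of_monotone hf hfc hf0)

end FSD

-- Equal to `min 1 ((1 - γ) / (1 - α))` for `α < 1`, but monotone and continuous on all of `ℝ`.
def tailKernel (γ α : ℝ) : ℝ := (1 - γ) / (1 - min α γ)

section tailKernel

variable {γ : ℝ}

lemma tailKernel_nonneg (hγ : γ < 1) (α : ℝ) : 0 ≤ tailKernel γ α :=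
  div_nonneg (by linarith) (by linarith [min_le_right α γ])

lemma tailKernel_le_one (hγ : γ < 1) (α : ℝ) : tailKernel γ α ≤ 1 :=
  div_le_one_of_le₀ (by linarith [min_le_right α γ]) (by linarith [min_le_right α γ])

lemma monotone_tailKernel (hγ : γ < 1) : Monotone (tailKernel γ) := fun a b hab =>
  div_le_div_of_nonneg_left (by linarith) (by linarith [min_le_right b γ])
    (by linarith [min_le_min_right γ hab])

lemma continuous_tailKernel (hγ : γ < 1) : Continuous (tailKernel γ) :=
  continuous_const.div (continuous_const.sub (continuous_id.min continuous_const))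
    fun α => by linarith [min_le_right α γ]

lemma tailKernel_zero {α : ℝ} (hα : 0 ≤ α) : tailKernel 0 α = 1 := by
  simp [tailKernel, min_eq_right hα]

lemma integrable_tailKernel {μ : Measure ℝ} [IsFiniteMeasure μ] (hγ : γ < 1) :
    Integrable (tailKernel γ) μ :=
  .of_bound (continuous_tailKernel hγ).aestronglyMeasurable 1 <| ae_of_all _ fun α => by
    rw [Real.norm_of_nonneg (tailKernel_nonneg hγ α)]
    exact tailKernel_le_one hγ α

end tailKernel

lemma Tmap_nonneg (μ : Measure ℝ) {t : ℝ} (ht : t < 1) : 0 ≤ Tmap μ t :=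
  setIntegral_nonneg measurableSet_Icc fun α hα => inv_nonneg.2 (by linarith [hα.2])

section Tmap

variable {μ : Measure ℝ} [IsFiniteMeasure μ] {t : ℝ}

lemma integrableOn_inv_one_sub_Icc (ht : t < 1) :
    IntegrableOn (fun α : ℝ => (1 - α)⁻¹) (Icc 0 t) μ :=
  ContinuousOn.integrableOn_compact isCompact_Icc <|
    (continuousOn_const.sub continuousOn_id).inv₀ fun _ hα => (sub_pos.2 (hα.2.trans_lt ht)).ne'

lemma monotoneOn_Tmap : MonotoneOn (Tmap μ) (Iio 1) := fun s _ t ht hst =>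
  setIntegral_mono_set (integrableOn_inv_one_sub_Icc ht)
    ((ae_restrict_iff' measurableSet_Icc).2 <| ae_of_all _ fun α hα =>
      inv_nonneg.2 (by linarith [hα.2, mem_Iio.1 ht]))
    (Icc_subset_Icc_right hst).eventuallyLE

lemma ofReal_Tmap (ht : t < 1) :
    ENNReal.ofReal (Tmap μ t) = ∫⁻ α in Icc 0 t, ENNReal.ofReal (1 - α)⁻¹ ∂μ :=
  ofReal_integral_eq_lintegral_ofReal (integrableOn_inv_one_sub_Icc ht)
    ((ae_restrict_iff' measurableSet_Icc).2 <| ae_of_all _ fun α hα =>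
      inv_nonneg.2 (by linarith [hα.2]))

lemma lintegral_Ioo_indicator_Icc {α γ : ℝ} (hα : α ∈ Ico (0:ℝ) 1) :
    ∫⁻ t in Ioo γ 1, (Icc 0 t).indicator (fun α => ENNReal.ofReal (1 - α)⁻¹) α =
      ENNReal.ofReal (tailKernel γ α) := by
  have h1α : 0 < 1 - α := by linarith [hα.2]
  have hind : (fun t => (Icc 0 t).indicator (fun α => ENNReal.ofReal (1 - α)⁻¹) α) =
      (Ici α).indicator fun _ => ENNReal.ofReal (1 - α)⁻¹ := by
    ext t
    simp [indicator_apply, hα.1]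
  rw [hind, lintegral_indicator measurableSet_Ici, Measure.restrict_restrict measurableSet_Ici,
    setLIntegral_const]
  rcases le_or_gt α γ with hαγ | hγα
  · have hset : Ici α ∩ Ioo γ 1 = Ioo γ 1 := inter_eq_right.2 fun t ht => hαγ.trans ht.1.le
    rw [hset, Real.volume_Ioo,
      ← ENNReal.ofReal_mul (inv_nonneg.2 h1α.le), tailKernel, min_eq_left hαγ, inv_mul_eq_div]
  · have : Ici α ∩ Ioo γ 1 = Ico α 1 := by
      ext t
      simp only [mem_inter_iff, mem_Ici, mem_Ioo, mem_Ico]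
      exact ⟨fun h => ⟨h.1, h.2.2⟩, fun h => ⟨h.1, hγα.trans_le h.1, h.2⟩⟩
    rw [this, Real.volume_Ico, ← ENNReal.ofReal_mul (inv_nonneg.2 h1α.le),
      inv_mul_cancel₀ h1α.ne', tailKernel, min_eq_right hγα.le, div_self (by linarith)]

lemma lintegral_Ioo_ofReal_Tmap (hμ : ∀ᵐ α ∂μ, α ∈ Ico (0:ℝ) 1) (γ : ℝ) :
    ∫⁻ t in Ioo γ 1, ENNReal.ofReal (Tmap μ t) = ∫⁻ α, ENNReal.ofReal (tailKernel γ α) ∂μ := by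
  have hmeas : Measurable fun p : ℝ × ℝ =>
      (Icc 0 p.1).indicator (fun α => ENNReal.ofReal (1 - α)⁻¹) p.2 := by
    have : MeasurableSet {p : ℝ × ℝ | 0 ≤ p.2 ∧ p.2 ≤ p.1} :=
      (measurableSet_le measurable_const measurable_snd).inter
        (measurableSet_le measurable_snd measurable_fst)
    exact (show Measurable ({p : ℝ × ℝ | 0 ≤ p.2 ∧ p.2 ≤ p.1}.indicator
      fun p => ENNReal.ofReal (1 - p.2)⁻¹) from Measurable.indicator (by fun_prop) this)
  calc ∫⁻ t in Ioo γ 1, ENNReal.ofReal (Tmap μ t)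
      = ∫⁻ t in Ioo γ 1, ∫⁻ α, (Icc 0 t).indicator
          (fun α => ENNReal.ofReal (1 - α)⁻¹) α ∂μ := by
        refine setLIntegral_congr_fun measurableSet_Ioo fun t ht => ?_
        rw [ofReal_Tmap ht.2, lintegral_indicator measurableSet_Icc]
    _ = ∫⁻ α, (∫⁻ t in Ioo γ 1, (Icc 0 t).indicator
          (fun α => ENNReal.ofReal (1 - α)⁻¹) α) ∂μ := lintegral_lintegral_swap hmeas.aemeasurable
    _ = ∫⁻ α, ENNReal.ofReal (tailKernel γ α) ∂μ := by
        refine lintegral_congr_ae ?_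
        filter_upwards [hμ] with α hα using lintegral_Ioo_indicator_Icc hα

lemma integral_Ioo_Tmap (hμ : ∀ᵐ α ∂μ, α ∈ Ico (0:ℝ) 1) {γ : ℝ} (hγ : γ < 1) :
    ∫ t in Ioo γ 1, Tmap μ t = ∫ α, tailKernel γ α ∂μ := by
  have hnonneg : 0 ≤ᵐ[volume.restrict (Ioo γ 1)] Tmap μ :=
    (ae_restrict_iff' measurableSet_Ioo).2 (ae_of_all _ fun t ht => Tmap_nonneg μ ht.2)
  have hmeas : AEStronglyMeasurable (Tmap μ) (volume.restrict (Ioo γ 1)) :=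
    (aemeasurable_restrict_of_monotoneOn measurableSet_Ioo
      (monotoneOn_Tmap.mono fun _ ht => ht.2)).aestronglyMeasurable
  rw [integral_eq_lintegral_of_nonneg_ae hnonneg hmeas, integral_eq_lintegral_of_nonneg_ae
    (ae_of_all _ (tailKernel_nonneg hγ)) (continuous_tailKernel hγ).aestronglyMeasurable,
    lintegral_Ioo_ofReal_Tmap hμ]

lemma integral_Ioo_zero_one_Tmap [IsProbabilityMeasure μ] (hμ : ∀ᵐ α ∂μ, α ∈ Ico (0:ℝ) 1) :
    ∫ t in Ioo 0 1, Tmap μ t = 1 := by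
  rw [integral_Ioo_Tmap hμ one_pos, integral_congr_ae (g := fun _ => 1)
    (by filter_upwards [hμ] with α hα using tailKernel_zero hα.1)]
  simp

end Tmap

theorem fsd_implies_majorization_general
    (μ1 μ2 : Measure ℝ) (h1 : IsP01 μ1) (h2 : IsP01 μ2)
    (hfsd : FSD μ1 μ2) :
    (∀ γ ∈ Icc (0:ℝ) 1, (∫ t in Ioo γ 1, Tmap μ1 t) ≤ ∫ t in Ioo γ 1, Tmap μ2 t) ∧
    (∫ t in Ioo (0:ℝ) 1, Tmap μ1 t) = ∫ t in Ioo (0:ℝ) 1, Tmap μ2 t := by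
  have : IsProbabilityMeasure μ1 := h1.1
  have : IsProbabilityMeasure μ2 := h2.1
  refine ⟨fun γ hγ => ?_, by
    rw [integral_Ioo_zero_one_Tmap h1.ae_mem_Ico, integral_Ioo_zero_one_Tmap h2.ae_mem_Ico]⟩
  rcases hγ.2.eq_or_lt with rfl | hγ1
  · simp
  rw [integral_Ioo_Tmap h1.ae_mem_Ico hγ1, integral_Ioo_Tmap h2.ae_mem_Ico hγ1]
  exact hfsd.integral_le_of_monotone (monotone_tailKernel hγ1) (continuous_tailKernel hγ1)
    (tailKernel_nonneg hγ1) (integrable_tailKernel hγ1)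

/-- If `μ₁, μ₂ ∈ 𝔓_q` and `μ₁` is dominated in first stochastic order
by `μ₂`, then `𝕋μ₁` is majorized by `𝕋μ₂`. -/
theorem fsd_implies_majorization
    (q : ℝ≥0∞) (hq : 1 < q)
    (μ1 μ2 : Measure ℝ) (h1 : IsP01 μ1) (h2 : IsP01 μ2)
    (h1q : MemLp (Tmap μ1) q stdP) (h2q : MemLp (Tmap μ2) q stdP)
    (hfsd : FSD μ1 μ2) :
    (∀ γ ∈ Icc (0:ℝ) 1, (∫ t in Ioo γ 1, Tmap μ1 t) ≤ ∫ t in Ioo γ 1, Tmap μ2 t) ∧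
    (∫ t in Ioo (0:ℝ) 1, Tmap μ1 t) = ∫ t in Ioo (0:ℝ) 1, Tmap μ2 t :=
  fsd_implies_majorization_general μ1 μ2 h1 h2 hfsd

end
end
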